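/- Let U ⊆ ℝ^m be open, ψ : U → ℝ be C¹, and F(A) = ψ(P₁(A), …, P_m(A)) with F'(A) = Σ_{l=1}^m l·∂_lψ(P₁(A),…,P_m(A))·A^{l−1}. For a symmetric positive definite n×n real matrix g and an arbitrary n×n real matrix h, set Φ(g,h) = F(g⁻¹ · ĥ), where ĥ = (h + hᵀ)/2, defined whenever g⁻¹ĥ lies in the domain of F. Then the partial Fréchet derivative of Φ in the h-variable satisfies, for every n×n real matrix a, (∂Φ/∂h)(g,h)(a) = trace(F'(g⁻¹ĥ) · g⁻¹ · â) = dF(g⁻¹ĥ)(g⁻¹â), where â = (a + aᵀ)/2. In particular (∂Φ/∂h)(g,h)(a) = (∂Φ/∂h)(g,h)(â) is a symmetric bilinear function of the entries of a. -/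

import Mathlib

/-!
`Φ` is `F` composed with the linear map `a ↦ g⁻¹ â`, so by the chain rule everything reduces to
`dF(A) B = trace (F'(A) B)`. This follows from `d(trace X^(k+1))(A) B = (k+1) trace (A^k B)`:
the derivative of `X ↦ X^(k+1)` is `B ↦ ∑ᵢ Aⁱ B A^(k-i)`, and all these summands have the same
trace by cyclicity.
-/

open Matrix

attribute [local instance] Matrix.normedAddCommGroup Matrix.normedSpace

/-- `P_k(A) = trace (A ^ k)`, bundled as the vector `(P₁(A), …, P_m(A))`. -/
noncomputable def Pvec (n m : ℕ) (A : Matrix (Fin n) (Fin n) ℝ) : Fin m → ℝ :=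
  fun l => (A ^ ((l : ℕ) + 1)).trace

/-- `F'(A) = ∑_{l=1}^m l ∂ψ/∂P_l (P₁(A),…,P_m(A)) A^{l-1}`
(the index `l : Fin m` represents the integer `l + 1 ∈ {1, …, m}`). -/
noncomputable def Fprime (n m : ℕ) (ψ : (Fin m → ℝ) → ℝ) (A : Matrix (Fin n) (Fin n) ℝ) :
    Matrix (Fin n) (Fin n) ℝ :=
  ∑ l : Fin m,
    (((l : ℕ) + 1 : ℝ) * fderiv ℝ ψ (Pvec n m A) (Pi.single l 1)) • A ^ (l : ℕ)

/-- The symmetrisation `â = (a + aᵀ)/2` of a bilinear form/matrix. -/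
noncomputable def symmetrise (n : ℕ) (a : Matrix (Fin n) (Fin n) ℝ) :
    Matrix (Fin n) (Fin n) ℝ :=
  ((1 : ℝ) / 2) • (a + aᵀ)

namespace Matrix

variable {ι 𝕜 : Type*} [Fintype ι] [NontriviallyNormedField 𝕜] [CompleteSpace 𝕜]

noncomputable def traceCLM : Matrix ι ι 𝕜 →L[𝕜] 𝕜 :=
  (traceLinearMap ι 𝕜 𝕜).toContinuousLinearMap

@[simp] lemma traceCLM_apply (X : Matrix ι ι 𝕜) : traceCLM X = X.trace := rfl

variable [DecidableEq ι]

noncomputable def mulCLM : Matrix ι ι 𝕜 →L[𝕜] Matrix ι ι 𝕜 →L[𝕜] Matrix ι ι 𝕜 :=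
  (LinearMap.toContinuousLinearMap.toLinearMap ∘ₗ
    LinearMap.mul 𝕜 (Matrix ι ι 𝕜)).toContinuousLinearMap

@[simp] lemma mulCLM_apply (X Y : Matrix ι ι 𝕜) : mulCLM X Y = X * Y := rfl

noncomputable def powDeriv (k : ℕ) (A : Matrix ι ι 𝕜) : Matrix ι ι 𝕜 →L[𝕜] Matrix ι ι 𝕜 :=
  ∑ i ∈ Finset.range k, mulCLM (A ^ i) ∘L mulCLM.flip (A ^ (k - 1 - i))

lemma powDeriv_apply (k : ℕ) (A B : Matrix ι ι 𝕜) :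
    powDeriv k A B = ∑ i ∈ Finset.range k, A ^ i * B * A ^ (k - 1 - i) := by
  simp only [powDeriv, _root_.sum_apply]
  exact Finset.sum_congr rfl fun i _ => (Matrix.mul_assoc _ _ _).symm

theorem hasFDerivAt_pow (k : ℕ) (A : Matrix ι ι 𝕜) :
    HasFDerivAt (fun X : Matrix ι ι 𝕜 => X ^ k) (powDeriv k A) A := by
  induction k with
  | zero => simpa [powDeriv] using hasFDerivAt_const (1 : Matrix ι ι 𝕜) A
  | succ k ih =>
    refine (mulCLM.hasFDerivAt_of_bilinear ih (hasFDerivAt_id A)).congr_fderiv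
      (ContinuousLinearMap.ext fun B => ?_)
    -- The derivative built by the product rule lives over the normed-space instances on matrices,
    -- not the ones instance search picks for `powDeriv`, so the two are compared pointwise.
    show A ^ k * B + powDeriv k A B * A = powDeriv (k + 1) A B
    simp only [powDeriv_apply, Finset.sum_range_succ, Finset.sum_mul, Nat.add_sub_cancel,
      Nat.sub_self, pow_zero, Matrix.mul_one]
    rw [add_comm]
    congr 1
    refine Finset.sum_congr rfl fun i hi => ?_
    have hik : k - 1 - i + 1 = k - i := by have := Finset.mem_range.1 hi; omega
    rw [Matrix.mul_assoc, ← pow_succ, hik]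

lemma trace_powDeriv_succ (k : ℕ) (A B : Matrix ι ι 𝕜) :
    (powDeriv (k + 1) A B).trace = (k + 1) * (A ^ k * B).trace := by
  have cyclic :
      ∀ i ∈ Finset.range (k + 1), (A ^ i * B * A ^ (k - i)).trace = (A ^ k * B).trace := by
    intro i hi
    have hik : k - i + i = k := by have := Finset.mem_range.1 hi; omega
    rw [trace_mul_comm, ← Matrix.mul_assoc, ← pow_add, hik]
  simp only [powDeriv_apply, Nat.add_sub_cancel, trace_sum, Finset.sum_congr rfl cyclic,
    Finset.sum_const, Finset.card_range, nsmul_eq_mul]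
  push_cast
  ring

theorem hasFDerivAt_trace_pow_succ (k : ℕ) (A : Matrix ι ι 𝕜) :
    HasFDerivAt (fun X : Matrix ι ι 𝕜 => (X ^ (k + 1)).trace)
      (((k : 𝕜) + 1) • traceCLM ∘L mulCLM (A ^ k)) A := by
  refine (traceCLM.hasFDerivAt.comp A (hasFDerivAt_pow (k + 1) A)).congr_fderiv
    (ContinuousLinearMap.ext fun B => ?_)
  show (powDeriv (k + 1) A B).trace = ((k : 𝕜) + 1) * (A ^ k * B).trace
  exact trace_powDeriv_succ k A B

end Matrix

theorem hasFDerivAt_Pvec (n m : ℕ) (A : Matrix (Fin n) (Fin n) ℝ) :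
    HasFDerivAt (Pvec n m)
      (ContinuousLinearMap.pi fun l : Fin m =>
        (((l : ℕ) : ℝ) + 1) • traceCLM ∘L mulCLM (A ^ (l : ℕ))) A :=
  hasFDerivAt_pi.2 fun l => hasFDerivAt_trace_pow_succ (l : ℕ) A

theorem hasFDerivAt_comp_Pvec {n m : ℕ} {ψ : (Fin m → ℝ) → ℝ} {A : Matrix (Fin n) (Fin n) ℝ}
    (hψ : DifferentiableAt ℝ ψ (Pvec n m A)) :
    HasFDerivAt (fun X => ψ (Pvec n m X)) (traceCLM ∘L mulCLM (Fprime n m ψ A)) A := by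
  refine (hψ.hasFDerivAt.comp A (hasFDerivAt_Pvec n m A)).congr_fderiv
    (ContinuousLinearMap.ext fun B => ?_)
  show fderiv ℝ ψ (Pvec n m A) (fun l : Fin m => (((l : ℕ) : ℝ) + 1) * (A ^ (l : ℕ) * B).trace)
    = (Fprime n m ψ A * B).trace
  rw [pi_eq_sum_univ' (fun l : Fin m => (((l : ℕ) : ℝ) + 1) * (A ^ (l : ℕ) * B).trace)]
  simp only [map_sum, map_smul, smul_eq_mul, Fprime, Finset.sum_mul, trace_sum, Matrix.smul_mul,
    trace_smul]
  exact Finset.sum_congr rfl fun l _ => by ring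

noncomputable def symmetriseCLM (n : ℕ) : Matrix (Fin n) (Fin n) ℝ →L[ℝ] Matrix (Fin n) (Fin n) ℝ :=
  LinearMap.toContinuousLinearMap
    { toFun := symmetrise n
      map_add' := fun x y => by simp only [symmetrise, transpose_add]; module
      map_smul' := fun c x => by simp only [symmetrise, transpose_smul, RingHom.id_apply]; module }

@[simp] lemma symmetriseCLM_apply (n : ℕ) (a : Matrix (Fin n) (Fin n) ℝ) :
    symmetriseCLM n a = symmetrise n a := rfl

lemma symmetrise_symmetrise (n : ℕ) (a : Matrix (Fin n) (Fin n) ℝ) :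
    symmetrise n (symmetrise n a) = symmetrise n a := by
  simp only [symmetrise, transpose_smul, transpose_add, transpose_transpose]
  module

theorem stmt_12_general (n m : ℕ) (U : Set (Fin m → ℝ)) (hU : IsOpen U)
    (ψ : (Fin m → ℝ) → ℝ) (hψ : ContDiffOn ℝ 1 ψ U)
    (g h : Matrix (Fin n) (Fin n) ℝ)
    (hdom : Pvec n m (g⁻¹ * symmetrise n h) ∈ U) :
    ∀ a : Matrix (Fin n) (Fin n) ℝ,
      (fderiv ℝ
          (fun h' : Matrix (Fin n) (Fin n) ℝ => ψ (Pvec n m (g⁻¹ * symmetrise n h'))) h a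
        = (Fprime n m ψ (g⁻¹ * symmetrise n h) * g⁻¹ * symmetrise n a).trace) ∧
      (fderiv ℝ
          (fun h' : Matrix (Fin n) (Fin n) ℝ => ψ (Pvec n m (g⁻¹ * symmetrise n h'))) h a
        = fderiv ℝ (fun X : Matrix (Fin n) (Fin n) ℝ => ψ (Pvec n m X))
            (g⁻¹ * symmetrise n h) (g⁻¹ * symmetrise n a)) ∧
      (fderiv ℝ
          (fun h' : Matrix (Fin n) (Fin n) ℝ => ψ (Pvec n m (g⁻¹ * symmetrise n h'))) h a
        = fderiv ℝ
            (fun h' : Matrix (Fin n) (Fin n) ℝ => ψ (Pvec n m (g⁻¹ * symmetrise n h'))) h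
            (symmetrise n a)) := by
  intro a
  set A := g⁻¹ * symmetrise n h
  have hF : HasFDerivAt (fun X => ψ (Pvec n m X)) (traceCLM ∘L mulCLM (Fprime n m ψ A)) A :=
    hasFDerivAt_comp_Pvec ((hψ.differentiableOn one_ne_zero).differentiableAt (hU.mem_nhds hdom))
  have hΦ : HasFDerivAt (fun h' => ψ (Pvec n m (g⁻¹ * symmetrise n h')))
      ((traceCLM ∘L mulCLM (Fprime n m ψ A)) ∘L mulCLM g⁻¹ ∘L symmetriseCLM n) h :=
    by exact hF.comp h (mulCLM g⁻¹ ∘L symmetriseCLM n).hasFDerivAt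
  rw [hΦ.fderiv]
  refine ⟨?_, ?_, ?_⟩
  · simp only [ContinuousLinearMap.comp_apply, symmetriseCLM_apply, mulCLM_apply, traceCLM_apply,
      Matrix.mul_assoc]
  · rw [hF.fderiv]; rfl
  · simp only [ContinuousLinearMap.comp_apply, symmetriseCLM_apply, symmetrise_symmetrise]

/-- Let `ψ` be `C¹` on the open `U ⊆ ℝ^m`,
`F(A) = ψ(P₁(A),…,P_m(A))`, `g` symmetric positive definite, `h` arbitrary and
`Φ(g,h) = F(g⁻¹ * ĥ)` where `ĥ = (h + hᵀ)/2`, assuming `g⁻¹ ĥ` lies in the domain of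
`F`. Then the partial Fréchet derivative of `Φ` in `h` satisfies
`(∂Φ/∂h)(g,h)(a) = trace (F'(g⁻¹ĥ) g⁻¹ â) = dF(g⁻¹ĥ)(g⁻¹ â)`; in particular
`(∂Φ/∂h)(g,h)(a) = (∂Φ/∂h)(g,h)(â)` (the derivative is a symmetric bilinear form). -/
theorem stmt_12 (n m : ℕ) (U : Set (Fin m → ℝ)) (hU : IsOpen U)
    (ψ : (Fin m → ℝ) → ℝ) (hψ : ContDiffOn ℝ 1 ψ U)
    (g h : Matrix (Fin n) (Fin n) ℝ) (hg : g.PosDef) (hgsym : g.IsSymm)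
    (hdom : Pvec n m (g⁻¹ * symmetrise n h) ∈ U) :
    ∀ a : Matrix (Fin n) (Fin n) ℝ,
      (fderiv ℝ
          (fun h' : Matrix (Fin n) (Fin n) ℝ => ψ (Pvec n m (g⁻¹ * symmetrise n h'))) h a
        = (Fprime n m ψ (g⁻¹ * symmetrise n h) * g⁻¹ * symmetrise n a).trace) ∧
      (fderiv ℝ
          (fun h' : Matrix (Fin n) (Fin n) ℝ => ψ (Pvec n m (g⁻¹ * symmetrise n h'))) h a
        = fderiv ℝ (fun X : Matrix (Fin n) (Fin n) ℝ => ψ (Pvec n m X))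
            (g⁻¹ * symmetrise n h) (g⁻¹ * symmetrise n a)) ∧
      (fderiv ℝ
          (fun h' : Matrix (Fin n) (Fin n) ℝ => ψ (Pvec n m (g⁻¹ * symmetrise n h'))) h a
        = fderiv ℝ
            (fun h' : Matrix (Fin n) (Fin n) ℝ => ψ (Pvec n m (g⁻¹ * symmetrise n h'))) h
            (symmetrise n a)) :=
  stmt_12_general n m U hU ψ hψ g h hdom
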